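/- arXiv:1607.08851 — 5 statements merged into one kernel-verified Lean document; each statement's English description precedes it below -/
import Mathlib

section
/- Let d ≥ 1, ε > 0, h > 0, A ∈ C²(ℝ; ℝ^d), and u₀ ∈ L^∞(ℝ^d) with u₀(x) ≥ ū > 0 for a.e. x. Let f_h be the time-discrete kinetic scheme with threshold ε, time step h and data u₀. Then for every n ≥ 0 and a.e. x ∈ ℝ^d, f_h(x,nh,v) = 1 for a.e. v ∈ [0,ū]; in particular [0,ū] ⊂ supp f_h(x,nh,·) and ∫ v f_h(x,nh,v) dv ≥ ū²/2 for a.e. x. -/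
/-!
The invariant is that `f_h(x,nh,·)` lies, for a.e. `x`, between the equilibria `χ_ū` and `χ_M`
(`M` bounding `|u₀|`) almost everywhere in `v`. Free transport is the shear
`(x,v) ↦ (x - hA'(v), v)`, which preserves Lebesgue measure on `ℝ^d × ℝ`, so it keeps the
invariant. A function between `χ_ū` and `χ_M` has mass in `[ū, M]`, and `u ↦ χ_u` is monotone,
so its projection `χ_{∫ f}` lies between them too. Finally `χ_ū ≤ f ≤ 1` forces `f = 1` on
`[0,ū]`.
-/

open MeasureTheory Real Filter Topology

noncomputable section

/-- Signed indicator `χ_u`: `1_{[0,u]}` if `u ≥ 0`, `-1_{[u,0]}` if `u < 0`. -/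
def chiFn (u : ℝ) (v : ℝ) : ℝ :=
  if 0 ≤ u then Set.indicator (Set.Icc 0 u) (fun _ => (1 : ℝ)) v
  else -Set.indicator (Set.Icc u 0) (fun _ => (1 : ℝ)) v

/-- Equilibrium projection `Π_f := χ_{∫ f}`. -/
def equil (f : ℝ → ℝ) : ℝ → ℝ := chiFn (∫ v, f v)

/-- Deviation functional `D(f)`; by Lean's convention `x/0 = 0`, `D(f) = 0`
whenever the denominator vanishes. -/
def dev (f : ℝ → ℝ) : ℝ :=
  (∫ v, v * (f v - equil f v)) / (∫ v, v * equil f v)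

/-- Nondegeneracy of the flux `A` on `[a,b]`. -/
def Nondeg (d : ℕ) (A : ℝ → EuclideanSpace ℝ (Fin d)) (a b : ℝ) : Prop :=
  ∀ σ : EuclideanSpace ℝ (Fin d), ‖σ‖ = 1 → ∀ ξ : ℝ,
    volume {v ∈ Set.Icc a b | (inner ℝ (deriv A v) σ : ℝ) = ξ} = 0

/-- Grid values `f_h(·, nh, ·)` of the time-discrete kinetic scheme. -/
def schemeGrid (d : ℕ) (ε h : ℝ) (A : ℝ → EuclideanSpace ℝ (Fin d))
    (u₀ : EuclideanSpace ℝ (Fin d) → ℝ) :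
    ℕ → EuclideanSpace ℝ (Fin d) → ℝ → ℝ
  | 0 => fun x v => chiFn (u₀ x) v
  | n + 1 => fun x v =>
      if ε < dev (fun w => schemeGrid d ε h A u₀ n (x - h • deriv A w) w) then
        equil (fun w => schemeGrid d ε h A u₀ n (x - h • deriv A w) w) v
      else schemeGrid d ε h A u₀ n (x - h • deriv A v) v

/-- The time-discrete kinetic scheme `f_h(x,t,v)`. -/
def scheme (d : ℕ) (ε h : ℝ) (A : ℝ → EuclideanSpace ℝ (Fin d))
    (u₀ : EuclideanSpace ℝ (Fin d) → ℝ)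
    (x : EuclideanSpace ℝ (Fin d)) (t : ℝ) (v : ℝ) : ℝ :=
  schemeGrid d ε h A u₀ ⌊t / h⌋₊ (x - (t - (⌊t / h⌋₊ : ℝ) * h) • deriv A v) v

open Set Function

lemma chiFn_of_nonneg {u : ℝ} (hu : 0 ≤ u) : chiFn u = (Icc 0 u).indicator 1 := by
  funext v; exact if_pos hu

lemma chiFn_of_neg {u : ℝ} (hu : u < 0) : chiFn u = -(Icc u 0).indicator 1 := by
  funext v; exact if_neg hu.not_ge

lemma chiFn_mono (v : ℝ) : Monotone (chiFn · v) := by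
  intro u w huw
  simp only [chiFn, indicator, mem_Icc]
  split_ifs <;> grind

lemma chiFn_le_one (u v : ℝ) : chiFn u v ≤ 1 := by
  simp only [chiFn, indicator]
  split_ifs <;> norm_num

lemma chiFn_eq_one_of_mem {u v : ℝ} (hv : v ∈ Icc 0 u) : chiFn u v = 1 := by
  rw [chiFn_of_nonneg (hv.1.trans hv.2), indicator_of_mem hv, Pi.one_apply]

lemma chiFn_eq_zero_of_neg {u v : ℝ} (hu : 0 ≤ u) (hv : v < 0) : chiFn u v = 0 := by
  rw [chiFn_of_nonneg hu, indicator_of_notMem fun h => hv.not_ge h.1]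

lemma chiFn_nonpos_of_neg (u : ℝ) {v : ℝ} (hv : v < 0) : chiFn u v ≤ 0 := by
  simp only [chiFn, indicator, mem_Icc]
  split_ifs <;> grind

lemma mul_mem_Icc_mul_chiFn {a b v y : ℝ} (ha : 0 ≤ a)
    (hy : y ∈ Icc (chiFn a v) (chiFn b v)) : v * y ∈ Icc (v * chiFn a v) (v * chiFn b v) := by
  rcases le_or_gt 0 v with hv | hv
  · exact ⟨mul_le_mul_of_nonneg_left hy.1 hv, mul_le_mul_of_nonneg_left hy.2 hv⟩
  · have ha0 : chiFn a v = 0 := chiFn_eq_zero_of_neg ha hv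
    have hb0 : chiFn b v = 0 := le_antisymm (chiFn_nonpos_of_neg b hv) (ha0 ▸ hy.1.trans hy.2)
    have hy0 : y = 0 := le_antisymm (hb0 ▸ hy.2) (ha0 ▸ hy.1)
    simp [ha0, hb0, hy0]

lemma measurable_chiFn : Measurable (uncurry chiFn) := by
  have hIcc {a b : ℝ × ℝ → ℝ} (ha : Measurable a) (hb : Measurable b) :
      MeasurableSet {p : ℝ × ℝ | p.2 ∈ Icc (a p) (b p)} :=
    (measurableSet_le ha measurable_snd).inter (measurableSet_le measurable_snd hb)
  exact Measurable.ite (measurableSet_le measurable_const measurable_fst)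
    (measurable_const.indicator (hIcc measurable_const measurable_fst))
    (measurable_const.indicator (hIcc measurable_fst measurable_const)).neg

lemma Set.mul_indicator_one {R : Type*} [MulZeroOneClass R] (s : Set R) :
    (fun v => v * s.indicator 1 v) = s.indicator fun v => v := by
  ext v; by_cases hv : v ∈ s <;> simp [hv]

lemma integrable_indicator_Icc {a b : ℝ} {f : ℝ → ℝ} (hf : Continuous f) :
    Integrable ((Icc a b).indicator f) :=
  (integrable_indicator_iff measurableSet_Icc).2 hf.integrableOn_Icc

lemma integrable_chiFn (u : ℝ) : Integrable (chiFn u) := by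
  rcases le_or_gt 0 u with hu | hu
  · rw [chiFn_of_nonneg hu]; exact integrable_indicator_Icc continuous_const
  · rw [chiFn_of_neg hu]; exact (integrable_indicator_Icc continuous_const).neg

lemma integrable_mul_chiFn (u : ℝ) : Integrable fun v => v * chiFn u v := by
  rcases le_or_gt 0 u with hu | hu
  · rw [chiFn_of_nonneg hu, mul_indicator_one]; exact integrable_indicator_Icc continuous_id
  · simp only [chiFn_of_neg hu, Pi.neg_apply, mul_neg]
    refine Integrable.neg (f := fun v => v * (Icc u 0).indicator 1 v) ?_
    rw [mul_indicator_one]; exact integrable_indicator_Icc continuous_id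

lemma integral_chiFn (u : ℝ) : ∫ v, chiFn u v = u := by
  rcases le_or_gt 0 u with hu | hu
  · simp [chiFn_of_nonneg hu, integral_indicator measurableSet_Icc, hu]
  · simp [chiFn_of_neg hu, integral_neg, integral_indicator measurableSet_Icc, hu.le]

lemma integral_mul_chiFn (u : ℝ) : ∫ v, v * chiFn u v = u ^ 2 / 2 := by
  have moment {a b : ℝ} (hab : a ≤ b) :
      ∫ v, v * (Icc a b).indicator 1 v = (b ^ 2 - a ^ 2) / 2 := by
    rw [mul_indicator_one, integral_indicator measurableSet_Icc, integral_Icc_eq_integral_Ioc,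
      ← intervalIntegral.integral_of_le hab, integral_id]
  rcases le_or_gt 0 u with hu | hu
  · rw [chiFn_of_nonneg hu, moment hu]; ring
  · simp only [chiFn_of_neg hu, Pi.neg_apply, mul_neg, integral_neg, moment hu.le]; ring

lemma closure_subset_tsupport_of_ae_ne_zero {X R : Type*} [TopologicalSpace X]
    [MeasurableSpace X] [Zero R] (μ : Measure X) [μ.IsOpenPosMeasure] {g : X → R} {U : Set X}
    (hU : IsOpen U) (hg : ∀ᵐ x ∂μ, x ∈ U → g x ≠ 0) : closure U ⊆ tsupport g := by
  refine closure_minimal (sdiff_eq_empty.1 ?_) (isClosed_tsupport g)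
  refine (hU.sdiff (isClosed_tsupport g)).eq_empty_of_measure_zero (μ := μ)
    (measure_mono_null ?_ (ae_iff.1 hg))
  exact fun x hx hgx => hgx hx.1 (image_eq_zero_of_notMem_tsupport hx.2)

def relax (ε : ℝ) (g : ℝ → ℝ) : ℝ → ℝ :=
  if ε < dev g then equil g else g

def BetweenEquilibria (a b : ℝ) (g : ℝ → ℝ) : Prop :=
  ∀ᵐ v, g v ∈ Icc (chiFn a v) (chiFn b v)

namespace BetweenEquilibria

variable {a b : ℝ} {g : ℝ → ℝ}

lemma integrable (hgm : AEStronglyMeasurable g) (hg : BetweenEquilibria a b g) :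
    Integrable g :=
  integrable_of_le_of_le hgm (hg.mono fun _ h => h.1) (hg.mono fun _ h => h.2)
    (integrable_chiFn a) (integrable_chiFn b)

lemma integral_mem_Icc (hgm : AEStronglyMeasurable g) (hg : BetweenEquilibria a b g) :
    ∫ v, g v ∈ Icc a b := by
  have hgi := hg.integrable hgm
  constructor
  · calc a = ∫ v, chiFn a v := (integral_chiFn a).symm
      _ ≤ ∫ v, g v := integral_mono_ae (integrable_chiFn a) hgi (hg.mono fun _ h => h.1)
  · calc ∫ v, g v ≤ ∫ v, chiFn b v :=
          integral_mono_ae hgi (integrable_chiFn b) (hg.mono fun _ h => h.2)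
      _ = b := integral_chiFn b

lemma equil (hgm : AEStronglyMeasurable g) (hg : BetweenEquilibria a b g) :
    BetweenEquilibria a b (equil g) :=
  have hint := hg.integral_mem_Icc hgm
  ae_of_all _ fun v => ⟨chiFn_mono v hint.1, chiFn_mono v hint.2⟩

lemma relax (ε : ℝ) (hgm : AEStronglyMeasurable g) (hg : BetweenEquilibria a b g) :
    BetweenEquilibria a b (relax ε g) := by
  unfold _root_.relax
  split_ifs
  exacts [hg.equil hgm, hg]

lemma ae_eq_one (hg : BetweenEquilibria a b g) : ∀ᵐ v, v ∈ Icc 0 a → g v = 1 :=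
  hg.mono fun v hv hva =>
    le_antisymm (hv.2.trans (chiFn_le_one b v)) ((chiFn_eq_one_of_mem hva).symm.le.trans hv.1)

lemma Icc_subset_tsupport (ha : 0 < a) (hg : BetweenEquilibria a b g) :
    Icc 0 a ⊆ tsupport g := by
  rw [← closure_Ioo ha.ne]
  refine closure_subset_tsupport_of_ae_ne_zero volume isOpen_Ioo ?_
  filter_upwards [hg.ae_eq_one] with v hv hvI
  rw [hv (Ioo_subset_Icc_self hvI)]
  exact one_ne_zero

lemma le_integral_mul (ha : 0 ≤ a) (hgm : AEStronglyMeasurable g)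
    (hg : BetweenEquilibria a b g) : a ^ 2 / 2 ≤ ∫ v, v * g v := by
  have hmul := hg.mono fun v hv => mul_mem_Icc_mul_chiFn ha hv
  have hint : Integrable fun v => v * g v :=
    integrable_of_le_of_le (aestronglyMeasurable_id.mul hgm) (hmul.mono fun _ h => h.1)
      (hmul.mono fun _ h => h.2) (integrable_mul_chiFn a) (integrable_mul_chiFn b)
  calc a ^ 2 / 2 = ∫ v, v * chiFn a v := (integral_mul_chiFn a).symm
    _ ≤ ∫ v, v * g v :=
        integral_mono_ae (integrable_mul_chiFn a) hint (hmul.mono fun _ h => h.1)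

end BetweenEquilibria

lemma measurableSet_mem_Icc_chiFn {α : Type*} [MeasurableSpace α] {F : α × ℝ → ℝ}
    (hF : Measurable F) (a b : ℝ) :
    MeasurableSet {p | F p ∈ Icc (chiFn a p.2) (chiFn b p.2)} :=
  (measurableSet_le (measurable_chiFn.comp (measurable_const.prodMk measurable_snd)) hF).inter
    (measurableSet_le hF (measurable_chiFn.comp (measurable_const.prodMk measurable_snd)))

section Measurability

variable {α : Type*} [MeasurableSpace α] {F : α → ℝ → ℝ}

lemma measurable_integral_uncurry (hF : Measurable (uncurry F)) :
    Measurable fun x => ∫ v, F x v :=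
  hF.stronglyMeasurable.integral_prod_right'.measurable

lemma measurable_uncurry_equil (hF : Measurable (uncurry F)) :
    Measurable (uncurry fun x => equil (F x)) :=
  measurable_chiFn.comp
    (((measurable_integral_uncurry hF).comp measurable_fst).prodMk measurable_snd)

lemma measurable_dev (hF : Measurable (uncurry F)) : Measurable fun x => dev (F x) := by
  have hmoment {G : α → ℝ → ℝ} (hG : Measurable (uncurry G)) :
      Measurable fun x => ∫ v, v * G x v :=
    measurable_integral_uncurry (F := fun x v => v * G x v) (measurable_snd.mul hG)
  exact (hmoment (G := fun x v => F x v - equil (F x) v)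
    (hF.sub (measurable_uncurry_equil hF))).div (hmoment (measurable_uncurry_equil hF))

lemma measurable_uncurry_relax (ε : ℝ) (hF : Measurable (uncurry F)) :
    Measurable (uncurry fun x => relax ε (F x)) := by
  have : uncurry (fun x => relax ε (F x)) =
      fun p => if ε < dev (F p.1) then uncurry (fun x => equil (F x)) p else uncurry F p := by
    ext p; simp only [uncurry, relax]; split_ifs <;> rfl
  rw [this]
  exact Measurable.ite
    (measurableSet_lt measurable_const ((measurable_dev hF).comp measurable_fst))
    (measurable_uncurry_equil hF) hF

end Measurability

lemma measurePreserving_sub_prod {G β : Type*} [AddGroup G] [MeasurableSpace G]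
    [MeasurableAdd₂ G] [MeasurableNeg G] [MeasurableSpace β] (μ : Measure G) [SFinite μ]
    [μ.IsAddRightInvariant] (ν : Measure β) [SFinite ν] {c : β → G} (hc : Measurable c) :
    MeasurePreserving (fun p : G × β => (p.1 - c p.2, p.2)) (μ.prod ν) (μ.prod ν) := by
  have hskew :
      MeasurePreserving (fun p : β × G => (p.1, p.2 - c p.1)) (ν.prod μ) (ν.prod μ) :=
    (MeasurePreserving.id ν).skew_product (measurable_snd.sub (hc.comp measurable_fst))
      (ae_of_all _ fun v => map_sub_right_eq_self μ (c v))
  exact (Measure.measurePreserving_swap.comp hskew).comp Measure.measurePreserving_swap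

section Transport

variable {E : Type*} [NormedAddCommGroup E] [NormedSpace ℝ E]

/-- For `f = f_h(·,nh,·)` this is the paper's `f_h(·,(n+1)h−,·)`. -/
def transport (h : ℝ) (A : ℝ → E) (f : E → ℝ → ℝ) (x : E) (v : ℝ) : ℝ :=
  f (x - h • deriv A v) v

variable [MeasurableSpace E] [BorelSpace E] [CompleteSpace E] [SecondCountableTopology E]
  {h : ℝ} {A : ℝ → E} {f : E → ℝ → ℝ}

lemma measurable_uncurry_transport (hf : Measurable (uncurry f)) :
    Measurable (uncurry (transport h A f)) :=
  hf.comp ((measurable_fst.sub (((measurable_deriv A).comp measurable_snd).const_smul h)).prodMk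
    measurable_snd)

lemma ae_transport (μ : Measure E) [SFinite μ] [μ.IsAddRightInvariant] (ν : Measure ℝ)
    [SFinite ν] {Q : ℝ → ℝ → Prop} (hf : ∀ᵐ p ∂μ.prod ν, Q p.2 (uncurry f p)) :
    ∀ᵐ p ∂μ.prod ν, Q p.2 (uncurry (transport h A f) p) :=
  (measurePreserving_sub_prod μ ν
    ((measurable_deriv A).const_smul h)).quasiMeasurePreserving.ae hf

end Transport

section SchemeGrid

variable {d : ℕ} {ε h : ℝ} {A : ℝ → EuclideanSpace ℝ (Fin d)}
  {u₀ : EuclideanSpace ℝ (Fin d) → ℝ}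

lemma schemeGrid_succ (n : ℕ) : schemeGrid d ε h A u₀ (n + 1) =
    fun x => relax ε (transport h A (schemeGrid d ε h A u₀ n) x) := by
  funext x v
  by_cases hc : ε < dev (transport h A (schemeGrid d ε h A u₀ n) x)
  · rw [relax, if_pos hc]; exact if_pos hc
  · rw [relax, if_neg hc]; exact if_neg hc

lemma measurable_schemeGrid (hu₀ : Measurable u₀) (n : ℕ) :
    Measurable (uncurry (schemeGrid d ε h A u₀ n)) := by
  induction n with
  | zero => exact measurable_chiFn.comp ((hu₀.comp measurable_fst).prodMk measurable_snd)
  | succ n ih =>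
    rw [schemeGrid_succ]
    exact measurable_uncurry_relax ε (measurable_uncurry_transport ih)

lemma ae_schemeGrid_mem_Icc_chiFn (hu₀ : Measurable u₀) {a b : ℝ}
    (h₀ : ∀ᵐ x, u₀ x ∈ Icc a b) (n : ℕ) :
    ∀ᵐ p ∂(volume : Measure (EuclideanSpace ℝ (Fin d))).prod volume,
      uncurry (schemeGrid d ε h A u₀ n) p ∈ Icc (chiFn a p.2) (chiFn b p.2) := by
  induction n with
  | zero =>
    filter_upwards [Measure.quasiMeasurePreserving_fst.ae h₀] with p hp
    exact ⟨chiFn_mono _ hp.1, chiFn_mono _ hp.2⟩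
  | succ n ih =>
    rw [Measure.ae_prod_iff_ae_ae (measurableSet_mem_Icc_chiFn (measurable_schemeGrid hu₀ _) a b)]
    have htransport := ae_transport (h := h) (A := A)
      (Q := fun v y => y ∈ Icc (chiFn a v) (chiFn b v)) volume volume ih
    filter_upwards [Measure.ae_ae_of_ae_prod htransport] with x hx
    simp only [schemeGrid_succ, uncurry_apply_pair] at hx ⊢
    have hgm : Measurable (transport h A (schemeGrid d ε h A u₀ n) x) :=
      (measurable_uncurry_transport (measurable_schemeGrid hu₀ n)).of_uncurry_left
    exact BetweenEquilibria.relax ε hgm.aestronglyMeasurable hx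

end SchemeGrid

theorem scheme_lower_plateau_general
    (d : ℕ) (ε : ℝ) (h : ℝ)
    (A : ℝ → EuclideanSpace ℝ (Fin d))
    (u₀ : EuclideanSpace ℝ (Fin d) → ℝ) (hu₀m : Measurable u₀)
    (M : ℝ) (hM : ∀ᵐ x ∂(volume : Measure (EuclideanSpace ℝ (Fin d))), |u₀ x| ≤ M)
    (ub : ℝ) (hub : 0 < ub)
    (hlow : ∀ᵐ x ∂(volume : Measure (EuclideanSpace ℝ (Fin d))), ub ≤ u₀ x) :
    ∀ n : ℕ,
      ∀ᵐ x ∂(volume : Measure (EuclideanSpace ℝ (Fin d))),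
        (∀ᵐ v ∂(volume : Measure ℝ), v ∈ Set.Icc (0 : ℝ) ub →
          schemeGrid d ε h A u₀ n x v = 1) ∧
        Set.Icc (0 : ℝ) ub ⊆ tsupport (fun v => schemeGrid d ε h A u₀ n x v) ∧
        ub ^ 2 / 2 ≤ ∫ v, v * schemeGrid d ε h A u₀ n x v := by
  intro n
  have h₀ : ∀ᵐ x, u₀ x ∈ Icc ub M := by
    filter_upwards [hM, hlow] with x hxM hx using ⟨hx, (le_abs_self _).trans hxM⟩
  have hband := ae_schemeGrid_mem_Icc_chiFn (ε := ε) (h := h) (A := A) hu₀m h₀ n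
  filter_upwards [Measure.ae_ae_of_ae_prod hband] with x hx
  have hx : BetweenEquilibria ub M (schemeGrid d ε h A u₀ n x) := hx
  have hgm : AEStronglyMeasurable (schemeGrid d ε h A u₀ n x) :=
    (measurable_schemeGrid hu₀m n).of_uncurry_left.aestronglyMeasurable
  exact ⟨hx.ae_eq_one, hx.Icc_subset_tsupport hub, hx.le_integral_mul hub.le hgm⟩

/-- **Persistence of a lower kinetic plateau**: if `u₀ ≥ ū > 0` a.e. then the grid
densities equal `1` a.e. on `[0,ū]`, so `[0,ū] ⊂ supp f_h(x,nh,·)` and the first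
`v`-moment is at least `ū²/2`. -/
theorem scheme_lower_plateau
    (d : ℕ) (hd : 1 ≤ d) (ε : ℝ) (hε : 0 < ε) (h : ℝ) (hh : 0 < h)
    (A : ℝ → EuclideanSpace ℝ (Fin d)) (hA : ContDiff ℝ 2 A)
    (u₀ : EuclideanSpace ℝ (Fin d) → ℝ) (hu₀m : Measurable u₀)
    (M : ℝ) (hM : ∀ᵐ x ∂(volume : Measure (EuclideanSpace ℝ (Fin d))), |u₀ x| ≤ M)
    (ub : ℝ) (hub : 0 < ub)
    (hlow : ∀ᵐ x ∂(volume : Measure (EuclideanSpace ℝ (Fin d))), ub ≤ u₀ x) :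
    ∀ n : ℕ,
      ∀ᵐ x ∂(volume : Measure (EuclideanSpace ℝ (Fin d))),
        (∀ᵐ v ∂(volume : Measure ℝ), v ∈ Set.Icc (0 : ℝ) ub →
          schemeGrid d ε h A u₀ n x v = 1) ∧
        Set.Icc (0 : ℝ) ub ⊆ tsupport (fun v => schemeGrid d ε h A u₀ n x v) ∧
        ub ^ 2 / 2 ≤ ∫ v, v * schemeGrid d ε h A u₀ n x v :=
  scheme_lower_plateau_general d ε h A u₀ hu₀m M hM ub hub hlow

end
end

section
/- Let f ∈ L¹((0,∞)) have bounded support and satisfy f(v) ∈ [0,1] for a.e. v. Set u = ∫₀^∞ f(v) dv and f₀ = 1_{[0,u]}. Then there exists a nondecreasing map τ : [0,∞) → [0,∞) such that τ(v) ≥ v for all v ≥ 0 and, for every bounded measurable φ : [0,∞) → ℝ, ∫₀^∞ φ(τ(v)) f₀(v) dv = ∫₀^∞ φ(v) f(v) dv (i.e. the pushforward of the measure f₀(v) dv under τ is the measure f(v) dv). In particular, for every convex differentiable η : ℝ → ℝ, ∫₀^∞ η′(v) f(v) dv ≥ ∫₀^∞ η′(v) f₀(v) dv = η(u) − η(0).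 -/
/-!
Let `F w = ∫_{(0,w]} f`, the distribution function of `ν = f(v) dv`. Since `0 ≤ f ≤ 1`, `F` is
`1`-Lipschitz with `F 0 = 0`, so `F w ≤ w`. The quantile map `τ v = min {w ≥ 0 | v ≤ F w}` satisfies
`τ v ≤ b ↔ v ≤ F b` for `v ∈ (0,u]`, hence pushes Lebesgue measure on `(0,u]` forward to `ν`, and
`F w ≤ w` gives `τ v ≥ v`. For convex `η` the derivative is monotone, so
`∫₀ᵘ η' ≤ ∫₀ᵘ η' ∘ τ = ∫ η' f`.
-/

open MeasureTheory Set

section Quantile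

variable {F : ℝ → ℝ} {v : ℝ}

/-- `0` when no `w ≥ 0` has `v ≤ F w`. -/
noncomputable def nonnegQuantile (F : ℝ → ℝ) (v : ℝ) : ℝ := sInf {w | 0 ≤ w ∧ v ≤ F w}

lemma nonnegQuantile_le_iff (hF : Monotone F) (hFc : Continuous F) (hv : F 0 < v)
    (hne : ∃ w, 0 ≤ w ∧ v ≤ F w) {b : ℝ} : nonnegQuantile F v ≤ b ↔ v ≤ F b := by
  have hclosed : IsClosed {w | 0 ≤ w ∧ v ≤ F w} :=
    isClosed_Ici.inter (isClosed_le continuous_const hFc)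
  constructor
  · intro h
    exact (hclosed.csInf_mem hne ⟨0, fun _ hw => hw.1⟩).2.trans (hF h)
  · intro h
    exact csInf_le ⟨0, fun _ hw => hw.1⟩ ⟨(hF.reflect_lt (hv.trans_le h)).le, h⟩

lemma nonnegQuantile_mono {v₁ v₂ : ℝ} (hne : ∃ w, 0 ≤ w ∧ v₂ ≤ F w) (h : v₁ ≤ v₂) :
    nonnegQuantile F v₁ ≤ nonnegQuantile F v₂ :=
  csInf_le_csInf ⟨0, fun _ hw => hw.1⟩ hne fun _ hw => ⟨hw.1, h.trans hw.2⟩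

lemma le_nonnegQuantile (hF : ∀ w, 0 ≤ w → F w ≤ w) (hne : ∃ w, 0 ≤ w ∧ v ≤ F w) :
    v ≤ nonnegQuantile F v :=
  le_csInf hne fun w hw => hw.2.trans (hF w hw.1)

end Quantile

theorem map_restrict_Ioc_eq_of_le_iff {ν : Measure ℝ} [IsFiniteMeasure ν] {τ : ℝ → ℝ}
    (hτ : Measurable τ) {u : ℝ} (hνu : ∀ b, ν.real (Iic b) ≤ u)
    (hτ_le_iff : ∀ v ∈ Ioc 0 u, ∀ b, τ v ≤ b ↔ v ≤ ν.real (Iic b)) :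
    (volume.restrict (Ioc 0 u)).map τ = ν := by
  refine Measure.ext_of_Iic _ _ fun b => ?_
  have hpre : τ ⁻¹' Iic b ∩ Ioc 0 u = Ioc 0 (ν.real (Iic b)) := by
    ext v
    constructor
    · rintro ⟨hvb, hv⟩
      exact ⟨hv.1, (hτ_le_iff v hv b).1 hvb⟩
    · rintro ⟨hv0, hvb⟩
      have hv : v ∈ Ioc 0 u := ⟨hv0, hvb.trans (hνu b)⟩
      exact ⟨(hτ_le_iff v hv b).2 hvb, hv⟩
  rw [Measure.map_apply hτ measurableSet_Iic, Measure.restrict_apply (hτ measurableSet_Iic), hpre,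
    Real.volume_Ioc, sub_zero, ofReal_measureReal]

theorem lipschitzWith_measureReal_Iic {ν : Measure ℝ} [IsFiniteMeasure ν] (hν : ν ≤ volume) :
    LipschitzWith 1 fun b => ν.real (Iic b) := by
  refine LipschitzWith.of_le_add_mul 1 fun a b => ?_
  have hIoc : ν.real (Ioc b a) ≤ dist a b := calc
    ν.real (Ioc b a) ≤ volume.real (Ioc b a) := ENNReal.toReal_mono measure_Ioc_lt_top.ne (hν _)
    _ ≤ dist a b := by
      rw [Real.volume_real_Ioc, Real.dist_eq]
      exact max_le (le_abs_self _) (abs_nonneg _)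
  calc ν.real (Iic a) ≤ ν.real (Iic b ∪ Ioc b a) := measureReal_mono Iic_subset_Iic_union_Ioc
    _ ≤ ν.real (Iic b) + ν.real (Ioc b a) := measureReal_union_le _ _
    _ ≤ _ := by simpa using hIoc

theorem exists_monotone_map_restrict_Ioc_eq {ν : Measure ℝ} [IsFiniteMeasure ν]
    (hν : ν ≤ volume.restrict (Ioi 0)) {R : ℝ} (hR : ν (Ioi R) = 0) :
    ∃ τ : ℝ → ℝ, Monotone τ ∧ (∀ v, v ≤ τ v) ∧
      (volume.restrict (Ioc 0 (ν.real univ))).map τ = ν := by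
  set u := ν.real univ
  set F : ℝ → ℝ := fun b => ν.real (Iic b)
  have hFmono : Monotone F := fun a b h => measureReal_mono (Iic_subset_Iic.2 h)
  have hFlip : LipschitzWith 1 F :=
    lipschitzWith_measureReal_Iic (hν.trans Measure.restrict_le_self)
  have hF0 : F 0 = 0 := by
    have h := hν (Iic 0)
    rw [Measure.restrict_apply measurableSet_Iic, Iic_inter_Ioi, Ioc_self, measure_empty,
      nonpos_iff_eq_zero] at h
    simp [F, Measure.real, h]
  have hFid : ∀ w, 0 ≤ w → F w ≤ w := fun w hw => by
    simpa [hF0, Real.dist_eq, abs_of_nonneg hw] using (le_abs_self _).trans (hFlip.dist_le_mul w 0)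
  have hFu : ∀ b, F b ≤ u := fun b => measureReal_mono (subset_univ _)
  have hFR : u ≤ F (max R 0) := calc
    u = ν.real (Iic (max R 0) ∪ Ioi (max R 0)) := by rw [Iic_union_Ioi]
    _ ≤ F (max R 0) + ν.real (Ioi (max R 0)) := measureReal_union_le _ _
    _ = F (max R 0) := by
      rw [(measureReal_eq_zero_iff).2 (measure_mono_null (Ioi_subset_Ioi (le_max_left R 0)) hR),
        add_zero]
  have hne : ∀ v ≤ u, ∃ w, 0 ≤ w ∧ v ≤ F w := fun v hv => ⟨max R 0, le_max_right _ _, hv.trans hFR⟩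
  -- past `u` the quantile is frozen at its value at `u`; the `max` keeps `τ v ≥ v` there
  set τ : ℝ → ℝ := fun v => max v (nonnegQuantile F (min v u))
  have hτ_mono : Monotone τ := fun a b h => max_le_max h
    (nonnegQuantile_mono (hne _ (min_le_right _ _)) (min_le_min_right u h))
  have hτ_eq : ∀ v ∈ Ioc 0 u, τ v = nonnegQuantile F v := fun v hv => by
    simp only [τ, min_eq_left hv.2]
    exact max_eq_right (le_nonnegQuantile hFid (hne v hv.2))
  refine ⟨τ, hτ_mono, fun v => le_max_left _ _,
    map_restrict_Ioc_eq_of_le_iff hτ_mono.measurable hFu fun v hv b => ?_⟩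
  rw [hτ_eq v hv]
  exact nonnegQuantile_le_iff hFmono hFlip.continuous (by rw [hF0]; exact hv.1) (hne v hv.2)

section Density

variable {α : Type*} [MeasurableSpace α] {μ : Measure α} {f : α → ℝ}

lemma withDensity_ofReal_le (hf : ∀ᵐ x ∂μ, f x ≤ 1) :
    μ.withDensity (fun x => ENNReal.ofReal (f x)) ≤ μ := by
  calc μ.withDensity (fun x => ENNReal.ofReal (f x)) ≤ μ.withDensity 1 :=
        withDensity_mono (hf.mono fun x hx => ENNReal.ofReal_le_one.2 hx)
    _ = μ := withDensity_one

lemma measureReal_univ_withDensity_ofReal (hfi : Integrable f μ) (hf : 0 ≤ᵐ[μ] f) :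
    (μ.withDensity fun x => ENNReal.ofReal (f x)).real univ = ∫ x, f x ∂μ := by
  rw [Measure.real, withDensity_apply _ MeasurableSet.univ, Measure.restrict_univ,
    ← ofReal_integral_eq_lintegral_ofReal hfi hf, ENNReal.toReal_ofReal (integral_nonneg_of_ae hf)]

lemma integral_withDensity_ofReal (hfm : Measurable f) (hf : 0 ≤ᵐ[μ] f) (φ : α → ℝ) :
    ∫ x, φ x ∂(μ.withDensity fun x => ENNReal.ofReal (f x)) = ∫ x, φ x * f x ∂μ := by
  rw [integral_withDensity_eq_integral_toReal_smul hfm.ennreal_ofReal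
    (Filter.Eventually.of_forall fun _ => ENNReal.ofReal_lt_top)]
  refine integral_congr_ae (hf.mono fun x hx => ?_)
  simp [ENNReal.toReal_ofReal hx, mul_comm]

lemma withDensity_ofReal_apply_eq_zero {s : Set α} (hs : MeasurableSet s)
    (hf : ∀ᵐ x ∂μ, x ∈ s → f x = 0) : μ.withDensity (fun x => ENNReal.ofReal (f x)) s = 0 := by
  rw [withDensity_apply _ hs, setLIntegral_congr_fun_ae (g := fun _ => 0) hs
    (hf.mono fun x hx hxs => by simp [hx hxs]), lintegral_zero]

end Density

lemma setIntegral_Ioi_mul_indicator_Icc (ψ : ℝ → ℝ) (a b : ℝ) :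
    ∫ v in Ioi a, ψ v * (Icc a b).indicator (fun _ => (1 : ℝ)) v = ∫ v in Ioc a b, ψ v := by
  simp_rw [← indicator_mul_right, mul_one]
  rw [integral_indicator measurableSet_Icc, Measure.restrict_restrict measurableSet_Icc,
    show Icc a b ∩ Ioi a = Ioc a b by grind]

section Convex

variable {η : ℝ → ℝ}

lemma monotone_deriv_of_convexOn (hη : ConvexOn ℝ univ η) (hd : Differentiable ℝ η) :
    Monotone (deriv η) :=
  monotoneOn_univ.1 (hη.monotoneOn_deriv fun x _ => hd x)

lemma setIntegral_Ioc_deriv_of_convexOn (hη : ConvexOn ℝ univ η) (hd : Differentiable ℝ η)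
    {a b : ℝ} (hab : a ≤ b) : ∫ v in Ioc a b, deriv η v = η b - η a := by
  rw [← intervalIntegral.integral_of_le hab,
    intervalIntegral.integral_deriv_eq_sub (fun x _ => hd x)
      (monotone_deriv_of_convexOn hη hd).intervalIntegrable]

end Convex

lemma setIntegral_Ioc_le_setIntegral_comp {g τ : ℝ → ℝ} (hg : Monotone g) {a b : ℝ}
    (hτ : MonotoneOn τ (Icc a b)) (hτ_ge : ∀ v ∈ Ioc a b, v ≤ τ v) :
    ∫ v in Ioc a b, g v ≤ ∫ v in Ioc a b, g (τ v) :=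
  setIntegral_mono_on
    ((hg.monotoneOn _).integrableOn_isCompact isCompact_Icc |>.mono_set Ioc_subset_Icc_self)
    ((hg.comp_monotoneOn hτ).integrableOn_isCompact isCompact_Icc |>.mono_set Ioc_subset_Icc_self)
    measurableSet_Ioc fun v hv => hg (hτ_ge v hv)

/-- **Optimal transport map from the equilibrium density** (Lemma A.1): mass can be
moved from `f₀ = 1_{[0,u]}` to `f` by a nondecreasing map `τ` with `τ(v) ≥ v`;
consequently `∫ η′ f ≥ ∫ η′ f₀ = η(u) − η(0)` for convex `η`. -/
theorem transport_map_lemma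
    (f : ℝ → ℝ) (hfm : Measurable f)
    (hfi : IntegrableOn f (Set.Ioi (0 : ℝ)))
    (hbdd : Bornology.IsBounded {v ∈ Set.Ioi (0 : ℝ) | f v ≠ 0})
    (hfr : ∀ᵐ v ∂(volume.restrict (Set.Ioi (0 : ℝ))), f v ∈ Set.Icc (0 : ℝ) 1)
    (u : ℝ) (hu : u = ∫ v in Set.Ioi (0 : ℝ), f v) :
    ∃ τ : ℝ → ℝ,
      MonotoneOn τ (Set.Ici 0) ∧
      (∀ v, 0 ≤ v → v ≤ τ v) ∧
      -- `τ` pushes `f₀(v) dv` forward to `f(v) dv`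
      (∀ φ : ℝ → ℝ, Measurable φ → (∃ Cb : ℝ, ∀ v, |φ v| ≤ Cb) →
        (∫ v in Set.Ioi (0 : ℝ),
            φ (τ v) * Set.indicator (Set.Icc 0 u) (fun _ => (1 : ℝ)) v)
          = ∫ v in Set.Ioi (0 : ℝ), φ v * f v) ∧
      -- consequence for convex entropies
      (∀ η : ℝ → ℝ, ConvexOn ℝ Set.univ η → (∀ v, DifferentiableAt ℝ η v) →
        (∫ v in Set.Ioi (0 : ℝ),
            deriv η v * Set.indicator (Set.Icc 0 u) (fun _ => (1 : ℝ)) v) = η u - η 0 ∧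
        (∫ v in Set.Ioi (0 : ℝ),
            deriv η v * Set.indicator (Set.Icc 0 u) (fun _ => (1 : ℝ)) v)
          ≤ ∫ v in Set.Ioi (0 : ℝ), deriv η v * f v) := by
  have hf0 : 0 ≤ᵐ[volume.restrict (Ioi 0)] f := hfr.mono fun v h => h.1
  set ν := (volume.restrict (Ioi (0 : ℝ))).withDensity fun v => ENNReal.ofReal (f v)
  have : IsFiniteMeasure ν := isFiniteMeasure_withDensity_ofReal hfi.2
  have hνu : ν.real univ = u := (measureReal_univ_withDensity_ofReal hfi hf0).trans hu.symm
  obtain ⟨r, hr⟩ := hbdd.bddAbove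
  have hνr : ν (Ioi r) = 0 := withDensity_ofReal_apply_eq_zero measurableSet_Ioi <|
    (ae_restrict_mem measurableSet_Ioi).mono fun v hv hvr =>
      not_not.1 fun hfv => (hr ⟨hv, hfv⟩).not_gt hvr
  obtain ⟨τ, hτ, hτ_ge, hmap⟩ := exists_monotone_map_restrict_Ioc_eq
    (withDensity_ofReal_le (hfr.mono fun v h => h.2)) hνr
  rw [hνu] at hmap
  have hpush : ∀ φ : ℝ → ℝ, Measurable φ → ∫ v in Ioc 0 u, φ (τ v) = ∫ v in Ioi 0, φ v * f v :=
    fun φ hφ => by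
      rw [← integral_map hτ.measurable.aemeasurable hφ.aestronglyMeasurable, hmap,
        integral_withDensity_ofReal hfm hf0]
  simp only [setIntegral_Ioi_mul_indicator_Icc]
  refine ⟨τ, hτ.monotoneOn _, fun v _ => hτ_ge v, fun φ hφ _ => hpush φ hφ, fun η hη hd => ?_⟩
  refine ⟨setIntegral_Ioc_deriv_of_convexOn hη hd (hνu ▸ measureReal_nonneg), ?_⟩
  rw [← hpush _ (measurable_deriv η)]
  exact setIntegral_Ioc_le_setIntegral_comp (monotone_deriv_of_convexOn hη hd) (hτ.monotoneOn _)
    fun v _ => hτ_ge v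
end

section
/- Let η : ℝ → ℝ be convex and differentiable with η(0) = 0, η′(v) ≥ 0 for v ≥ 0 and η′(v) ≤ 0 for v ≤ 0. Then for every bounded measurable set A₁ ⊂ [0,∞): ∫_{A₁} η′(v) dv ≥ η(|A₁|); and for every bounded measurable set A₂ ⊂ (−∞,0]: ∫_{A₂} η′(v) dv ≤ −η(−|A₂|). (Here |·| denotes Lebesgue measure; these are the rearrangement inequalities used to prove the convexity lemma of Brenier.) -/
/-!
A monotone `f` integrates over a set `A ⊆ [a, ∞)` of finite measure to at least its integral over
`[a, a + |A|]`: the parts `A \ [a, a + |A|]` and `[a, a + |A|] \ A` have equal measure, and `f` is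
at least `f (a + |A|)` on the first and at most that on the second. For `f = η'` with `η` convex,
the integral over the interval is `η (a + |A|) - η a` by the fundamental theorem of calculus.
The case `A ⊆ (-∞, b]` is the mirror image.
-/

open MeasureTheory
open scoped ENNReal

section Exchange

variable {X : Type*} [MeasurableSpace X] {μ : Measure X} {f : X → ℝ} {s t : Set X} {c : ℝ}

theorem setIntegral_le_setIntegral_of_exchange (hs : MeasurableSet s) (ht : MeasurableSet t)
    (hμ : μ s = μ t) (hμs : μ s ≠ ∞) (hfs : IntegrableOn f s μ) (hft : IntegrableOn f t μ)
    (h_le : ∀ x ∈ t \ s, f x ≤ c) (h_ge : ∀ x ∈ s \ t, c ≤ f x) :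
    ∫ x in t, f x ∂μ ≤ ∫ x in s, f x ∂μ := by
  have hμ_diff : μ.real (t \ s) = μ.real (s \ t) := by
    rw [measureReal_def, measureReal_def, measure_sdiff_symm hs.nullMeasurableSet
      ht.nullMeasurableSet hμ (measure_ne_top_of_subset Set.inter_subset_left hμs)]
  have h_upper : ∫ x in t \ s, f x ∂μ ≤ c * μ.real (t \ s) := by
    rw [mul_comm, ← smul_eq_mul, ← setIntegral_const]
    exact setIntegral_mono_on (hft.mono_set Set.sdiff_subset)
      (integrableOn_const (measure_ne_top_of_subset Set.sdiff_subset (hμ ▸ hμs)))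
      (ht.diff hs) h_le
  have h_lower : c * μ.real (s \ t) ≤ ∫ x in s \ t, f x ∂μ :=
    setIntegral_ge_of_const_le_real (hs.diff ht)
      (measure_ne_top_of_subset Set.sdiff_subset hμs) h_ge (hfs.mono_set Set.sdiff_subset)
  calc ∫ x in t, f x ∂μ = ∫ x in s ∩ t, f x ∂μ + ∫ x in t \ s, f x ∂μ := by
        rw [Set.inter_comm, integral_inter_add_sdiff hs hft]
    _ ≤ ∫ x in s ∩ t, f x ∂μ + ∫ x in s \ t, f x ∂μ := by rw [hμ_diff] at h_upper; linarith
    _ = ∫ x in s, f x ∂μ := integral_inter_add_sdiff ht hfs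

end Exchange

theorem Monotone.integrableOn_of_isBounded {f : ℝ → ℝ} (hf : Monotone f) {s : Set ℝ}
    (hs : Bornology.IsBounded s) : IntegrableOn f s :=
  ((hf.monotoneOn _).integrableOn_isCompact hs.isCompact_closure).mono_set subset_closure

section Rearrangement

variable {f : ℝ → ℝ} {A : Set ℝ}

theorem Monotone.setIntegral_Icc_le_of_subset_Ici (hf : Monotone f) (hA : MeasurableSet A)
    (hAb : Bornology.IsBounded A) {a : ℝ} (hA_sub : A ⊆ Set.Ici a) :
    ∫ v in Set.Icc a (a + volume.real A), f v ≤ ∫ v in A, f v := by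
  have hA_fin : volume A ≠ ∞ := hAb.measure_lt_top.ne
  refine setIntegral_le_setIntegral_of_exchange (c := f (a + volume.real A)) hA measurableSet_Icc
    ?_ hA_fin (hf.integrableOn_of_isBounded hAb)
    (hf.integrableOn_of_isBounded (Metric.isBounded_Icc _ _)) (fun v hv => hf hv.1.2) ?_
  · rw [Real.volume_Icc, add_sub_cancel_left, ofReal_measureReal hA_fin]
  · rintro v ⟨hvA, hvI⟩
    exact hf (not_le.mp fun h => hvI ⟨hA_sub hvA, h⟩).le

theorem Monotone.setIntegral_le_Icc_of_subset_Iic (hf : Monotone f) (hA : MeasurableSet A)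
    (hAb : Bornology.IsBounded A) {b : ℝ} (hA_sub : A ⊆ Set.Iic b) :
    ∫ v in A, f v ≤ ∫ v in Set.Icc (b - volume.real A) b, f v := by
  have hA_fin : volume A ≠ ∞ := hAb.measure_lt_top.ne
  refine setIntegral_le_setIntegral_of_exchange (c := f (b - volume.real A)) measurableSet_Icc hA
    ?_ (by simp) (hf.integrableOn_of_isBounded (Metric.isBounded_Icc _ _))
    (hf.integrableOn_of_isBounded hAb) ?_ (fun v hv => hf hv.1.1)
  · rw [Real.volume_Icc, sub_sub_cancel, ofReal_measureReal hA_fin]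
  · rintro v ⟨hvA, hvI⟩
    exact hf (not_le.mp fun h => hvI ⟨h, hA_sub hvA⟩).le

end Rearrangement

theorem ConvexOn.monotone_deriv {η : ℝ → ℝ} (hconv : ConvexOn ℝ Set.univ η)
    (hdiff : ∀ v, DifferentiableAt ℝ η v) : Monotone (deriv η) :=
  monotoneOn_univ.mp (hconv.monotoneOn_deriv fun v _ => hdiff v)

theorem ConvexOn.setIntegral_Icc_deriv {η : ℝ → ℝ} (hconv : ConvexOn ℝ Set.univ η)
    (hdiff : ∀ v, DifferentiableAt ℝ η v) {a b : ℝ} (hab : a ≤ b) :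
    ∫ v in Set.Icc a b, deriv η v = η b - η a := by
  rw [integral_Icc_eq_integral_Ioc, ← intervalIntegral.integral_of_le hab,
    intervalIntegral.integral_deriv_eq_sub (fun x _ => hdiff x)
      (hconv.monotone_deriv hdiff).intervalIntegrable]

section ConvexDeriv

variable {η : ℝ → ℝ} {A : Set ℝ}

theorem ConvexOn.sub_le_setIntegral_deriv (hconv : ConvexOn ℝ Set.univ η)
    (hdiff : ∀ v, DifferentiableAt ℝ η v) (hA : MeasurableSet A) (hAb : Bornology.IsBounded A)
    {a : ℝ} (hA_sub : A ⊆ Set.Ici a) :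
    η (a + volume.real A) - η a ≤ ∫ v in A, deriv η v := by
  rw [← hconv.setIntegral_Icc_deriv hdiff (le_add_of_nonneg_right measureReal_nonneg)]
  exact (hconv.monotone_deriv hdiff).setIntegral_Icc_le_of_subset_Ici hA hAb hA_sub

theorem ConvexOn.setIntegral_deriv_le_sub (hconv : ConvexOn ℝ Set.univ η)
    (hdiff : ∀ v, DifferentiableAt ℝ η v) (hA : MeasurableSet A) (hAb : Bornology.IsBounded A)
    {b : ℝ} (hA_sub : A ⊆ Set.Iic b) :
    ∫ v in A, deriv η v ≤ η b - η (b - volume.real A) := by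
  rw [← hconv.setIntegral_Icc_deriv hdiff (sub_le_self _ measureReal_nonneg)]
  exact (hconv.monotone_deriv hdiff).setIntegral_le_Icc_of_subset_Iic hA hAb hA_sub

end ConvexDeriv

theorem rearrangement_inequalities_general
    (η : ℝ → ℝ) (hconv : ConvexOn ℝ Set.univ η) (hdiff : ∀ v, DifferentiableAt ℝ η v)
    (h0 : η 0 = 0) :
    (∀ A₁ : Set ℝ, MeasurableSet A₁ → Bornology.IsBounded A₁ → A₁ ⊆ Set.Ici 0 →
      η ((volume A₁).toReal) ≤ ∫ v in A₁, deriv η v) ∧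
    (∀ A₂ : Set ℝ, MeasurableSet A₂ → Bornology.IsBounded A₂ → A₂ ⊆ Set.Iic 0 →
      (∫ v in A₂, deriv η v) ≤ -η (-(volume A₂).toReal)) := by
  refine ⟨fun A hA hAb hA_sub => ?_, fun A hA hAb hA_sub => ?_⟩
  · simpa [h0, measureReal_def] using hconv.sub_le_setIntegral_deriv hdiff hA hAb hA_sub
  · simpa [h0, measureReal_def] using hconv.setIntegral_deriv_le_sub hdiff hA hAb hA_sub

/-- **Rearrangement inequalities** used in the proof of Brenier's convexity lemma. -/
theorem rearrangement_inequalities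
    (η : ℝ → ℝ) (hconv : ConvexOn ℝ Set.univ η) (hdiff : ∀ v, DifferentiableAt ℝ η v)
    (h0 : η 0 = 0)
    (hpos : ∀ v, 0 ≤ v → 0 ≤ deriv η v) (hneg : ∀ v, v ≤ 0 → deriv η v ≤ 0) :
    (∀ A₁ : Set ℝ, MeasurableSet A₁ → Bornology.IsBounded A₁ → A₁ ⊆ Set.Ici 0 →
      η ((volume A₁).toReal) ≤ ∫ v in A₁, deriv η v) ∧
    (∀ A₂ : Set ℝ, MeasurableSet A₂ → Bornology.IsBounded A₂ → A₂ ⊆ Set.Iic 0 →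
      (∫ v in A₂, deriv η v) ≤ -η (-(volume A₂).toReal)) :=
  rearrangement_inequalities_general η hconv hdiff h0
end

section
/- Let M > 0, ε > 0, and let f : (0,M) → [0,1] be measurable with u = ∫₀^M f(v) dv. Then ∫₀^M v ( f(v) − 1_{[0,u]}(v) ) dv ≥ 0, and if moreover ∫₀^M v ( f(v) − 1_{[0,u]}(v) ) dv ≤ ε u²/2 (i.e. D(f) ≤ ε), then for every Lipschitz function g : [0,M] → ℝ with Lipschitz constant L: | ∫₀^M g(v) ( f(v) − 1_{[0,u]}(v) ) dv | ≤ L ε u² / 2. -/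
open MeasureTheory Real Filter Topology

noncomputable section

/-!
Write `h = f - Π_f`. Both `f` and `Π_f` have mass `u`, so `∫ h = 0` and hence
`∫ φ h = ∫ (φ - φ u) h` for every `φ`. Since `0 ≤ f ≤ 1` and `Π_f = 1` exactly on `[0, u]`,
`(v - u) h v ≥ 0` pointwise (bathtub principle). Taking `φ = id` gives
`∫ v h = ∫ (v - u) h ≥ 0`, and for `g` `L`-Lipschitz,
`|∫ g h| ≤ ∫ L |v - u| |h| = L ∫ (v - u) h = L ∫ v h`.
-/

open Set
open scoped NNReal

section MeanZero

variable {μ : Measure ℝ} {h : ℝ → ℝ} {u : ℝ}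

theorem integral_sub_const_mul_of_integral_eq_zero {φ : ℝ → ℝ}
    (hφh : Integrable (fun v => φ v * h v) μ) (hh : Integrable h μ) (hmean : ∫ v, h v ∂μ = 0)
    (c : ℝ) : ∫ v, (φ v - c) * h v ∂μ = ∫ v, φ v * h v ∂μ := by
  simp_rw [sub_mul]
  rw [integral_sub hφh (hh.const_mul c), integral_const_mul, hmean, mul_zero, sub_zero]

theorem integral_id_mul_nonneg (hh : Integrable h μ) (hvh : Integrable (fun v => v * h v) μ)
    (hmean : ∫ v, h v ∂μ = 0) (hsign : ∀ᵐ v ∂μ, 0 ≤ (v - u) * h v) :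
    0 ≤ ∫ v, v * h v ∂μ := by
  rw [← integral_sub_const_mul_of_integral_eq_zero hvh hh hmean u]
  exact integral_nonneg_of_ae hsign

theorem abs_sub_mul_le_of_lipschitzWith {L : ℝ≥0} {g : ℝ → ℝ} (hg : LipschitzWith L g)
    {v y : ℝ} (hsign : 0 ≤ (v - u) * y) : |(g v - g u) * y| ≤ L * ((v - u) * y) :=
  calc |(g v - g u) * y| = |g v - g u| * |y| := abs_mul _ _
    _ ≤ L * |v - u| * |y| := by
        gcongr
        simpa only [Real.dist_eq] using hg.dist_le_mul v u
    _ = L * ((v - u) * y) := by rw [mul_assoc, ← abs_mul, abs_of_nonneg hsign]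

theorem abs_integral_mul_le_of_lipschitzWith {L : ℝ≥0} {g : ℝ → ℝ} (hg : LipschitzWith L g)
    (hh : Integrable h μ) (hvh : Integrable (fun v => v * h v) μ)
    (hmean : ∫ v, h v ∂μ = 0) (hsign : ∀ᵐ v ∂μ, 0 ≤ (v - u) * h v) :
    |∫ v, g v * h v ∂μ| ≤ L * ∫ v, v * h v ∂μ := by
  have hvu : Integrable (fun v => (v - u) * h v) μ := by
    simpa only [sub_mul, Pi.sub_def] using hvh.sub (hh.const_mul u)
  have hgu : Integrable (fun v => (g v - g u) * h v) μ :=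
    (hvu.const_mul L).mono' ((hg.continuous.sub continuous_const).aestronglyMeasurable.mul hh.1)
      (hsign.mono fun _ hv => abs_sub_mul_le_of_lipschitzWith hg hv)
  have hgh : Integrable (fun v => g v * h v) μ := by
    simpa only [sub_mul, Pi.add_def, sub_add_cancel] using hgu.add (hh.const_mul (g u))
  calc |∫ v, g v * h v ∂μ| = |∫ v, (g v - g u) * h v ∂μ| := by
        rw [integral_sub_const_mul_of_integral_eq_zero hgh hh hmean]
    _ ≤ ∫ v, |(g v - g u) * h v| ∂μ := abs_integral_le_integral_abs
    _ ≤ ∫ v, L * ((v - u) * h v) ∂μ :=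
        integral_mono_ae hgu.abs (hvu.const_mul L)
          (hsign.mono fun _ hv => abs_sub_mul_le_of_lipschitzWith hg hv)
    _ = L * ∫ v, v * h v ∂μ := by
        rw [integral_const_mul, integral_sub_const_mul_of_integral_eq_zero hvh hh hmean]

end MeanZero

/-- The paper's equilibrium projection `Π_f = 1_{[0,u]}`, for `f` of mass `u`. -/
def equilibriumProfile (u : ℝ) : ℝ → ℝ := (Icc 0 u).indicator fun _ => 1

theorem mul_sub_equilibriumProfile_nonneg {u v y : ℝ} (hv : 0 ≤ v) (hy : y ∈ Icc 0 1) :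
    0 ≤ (v - u) * (y - equilibriumProfile u v) := by
  by_cases hvu : v ≤ u
  · rw [equilibriumProfile, indicator_of_mem (show v ∈ Icc 0 u from ⟨hv, hvu⟩)]
    exact mul_nonneg_of_nonpos_of_nonpos (by linarith) (by linarith [hy.2])
  · rw [equilibriumProfile, indicator_of_notMem fun hmem => hvu hmem.2]
    exact mul_nonneg (by linarith) (by linarith [hy.1])

theorem abs_sub_equilibriumProfile_le_one {u v y : ℝ} (hy : y ∈ Icc 0 1) :
    |y - equilibriumProfile u v| ≤ 1 := by
  by_cases hv : v ∈ Icc 0 u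
  · rw [equilibriumProfile, indicator_of_mem hv, abs_le]
    constructor <;> linarith [hy.1, hy.2]
  · rw [equilibriumProfile, indicator_of_notMem hv, sub_zero, abs_of_nonneg hy.1]
    exact hy.2

theorem setIntegral_Ioc_equilibriumProfile {M u : ℝ} (hu₀ : 0 ≤ u)
    (huM : u ≤ volume.real (Ioc 0 M)) : ∫ v in Ioc 0 M, equilibriumProfile u v = u := by
  have hinter : Ioc 0 M ∩ Icc 0 u = Ioc 0 (min M u) := by
    ext v
    simp only [mem_inter_iff, mem_Ioc, mem_Icc, le_min_iff]
    constructor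
    · rintro ⟨⟨hv, hvM⟩, -, hvu⟩; exact ⟨hv, hvM, hvu⟩
    · rintro ⟨hv, hvM, hvu⟩; exact ⟨⟨hv, hvM⟩, hv.le, hvu⟩
  rw [Real.volume_real_Ioc, sub_zero] at huM
  rw [equilibriumProfile, setIntegral_indicator measurableSet_Icc, hinter, setIntegral_const,
    smul_eq_mul, mul_one, Real.volume_real_Ioc, sub_zero]
  grind

theorem integral_mem_Icc_of_ae_mem_Icc {α : Type*} [MeasurableSpace α] {μ : Measure α}
    [IsFiniteMeasure μ] {f : α → ℝ} (hf : ∀ᵐ x ∂μ, f x ∈ Icc 0 1) :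
    ∫ x, f x ∂μ ∈ Icc 0 (μ.real univ) := by
  have hle : ∫ x, f x ∂μ ≤ ∫ _, (1 : ℝ) ∂μ :=
    integral_mono_of_nonneg (hf.mono fun _ hx => hx.1) (integrable_const 1)
      (hf.mono fun _ hx => hx.2)
  rw [integral_const, smul_eq_mul, mul_one] at hle
  exact ⟨integral_nonneg_of_ae (hf.mono fun _ hx => hx.1), hle⟩

section Deviation

variable {M u : ℝ} {f : ℝ → ℝ}

theorem integrable_sub_equilibriumProfile (hfm : Measurable f)
    (hfr : ∀ᵐ v ∂volume.restrict (Ioc 0 M), f v ∈ Icc 0 1) :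
    Integrable (fun v => f v - equilibriumProfile u v) (volume.restrict (Ioc 0 M)) :=
  Integrable.of_bound
    (hfm.sub (measurable_const.indicator measurableSet_Icc)).aestronglyMeasurable 1
    (hfr.mono fun _ hy => abs_sub_equilibriumProfile_le_one hy)

theorem integrable_id_mul_sub_equilibriumProfile (hfm : Measurable f)
    (hfr : ∀ᵐ v ∂volume.restrict (Ioc 0 M), f v ∈ Icc 0 1) :
    Integrable (fun v => v * (f v - equilibriumProfile u v)) (volume.restrict (Ioc 0 M)) := by
  refine Integrable.of_bound (measurable_id.aestronglyMeasurable.mul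
    (integrable_sub_equilibriumProfile hfm hfr).1) M ?_
  filter_upwards [ae_restrict_mem measurableSet_Ioc, hfr] with v hv hy
  rw [norm_mul, norm_eq_abs, norm_eq_abs, abs_of_pos hv.1]
  exact (mul_le_of_le_one_right hv.1.le (abs_sub_equilibriumProfile_le_one hy)).trans hv.2

theorem integral_sub_equilibriumProfile_eq_zero (hfm : Measurable f)
    (hfr : ∀ᵐ v ∂volume.restrict (Ioc 0 M), f v ∈ Icc 0 1)
    (hu : u = ∫ v in Ioc 0 M, f v) : ∫ v in Ioc 0 M, (f v - equilibriumProfile u v) = 0 := by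
  have hf : IntegrableOn f (Ioc 0 M) := Integrable.of_bound hfm.aestronglyMeasurable 1
    (hfr.mono fun _ hy => by rw [norm_eq_abs, abs_of_nonneg hy.1]; exact hy.2)
  have hprofile : IntegrableOn (equilibriumProfile u) (Ioc 0 M) :=
    (integrable_const 1).indicator measurableSet_Icc
  obtain ⟨hu₀, huM⟩ := hu ▸ integral_mem_Icc_of_ae_mem_Icc hfr
  rw [measureReal_restrict_apply_univ] at huM
  rw [integral_sub hf hprofile, setIntegral_Ioc_equilibriumProfile hu₀ huM, hu, sub_self]

theorem ae_mul_sub_equilibriumProfile_nonneg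
    (hfr : ∀ᵐ v ∂volume.restrict (Ioc 0 M), f v ∈ Icc 0 1) :
    ∀ᵐ v ∂volume.restrict (Ioc 0 M), 0 ≤ (v - u) * (f v - equilibriumProfile u v) := by
  filter_upwards [ae_restrict_mem measurableSet_Ioc, hfr] with v hv hy
  exact mul_sub_equilibriumProfile_nonneg hv.1.le hy

end Deviation

theorem deviation_controls_lipschitz_moments_general
    (M ε : ℝ)
    (f : ℝ → ℝ) (hfm : Measurable f)
    (hfr : ∀ᵐ v ∂(volume.restrict (Set.Ioc (0 : ℝ) M)), f v ∈ Set.Icc (0 : ℝ) 1)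
    (u : ℝ) (hu : u = ∫ v in Set.Ioc (0 : ℝ) M, f v) :
    0 ≤ (∫ v in Set.Ioc (0 : ℝ) M,
          v * (f v - Set.indicator (Set.Icc 0 u) (fun _ => (1 : ℝ)) v)) ∧
    ((∫ v in Set.Ioc (0 : ℝ) M,
        v * (f v - Set.indicator (Set.Icc 0 u) (fun _ => (1 : ℝ)) v)) ≤ ε * u ^ 2 / 2 →
      ∀ (L : NNReal) (g : ℝ → ℝ), LipschitzOnWith L g (Set.Icc 0 M) →
        |∫ v in Set.Ioc (0 : ℝ) M,
            g v * (f v - Set.indicator (Set.Icc 0 u) (fun _ => (1 : ℝ)) v)|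
          ≤ (L : ℝ) * ε * u ^ 2 / 2) := by
  have hdev := integrable_sub_equilibriumProfile (u := u) hfm hfr
  have hmoment := integrable_id_mul_sub_equilibriumProfile (u := u) hfm hfr
  have hmean := integral_sub_equilibriumProfile_eq_zero hfm hfr hu
  have hsign := ae_mul_sub_equilibriumProfile_nonneg (u := u) hfr
  refine ⟨integral_id_mul_nonneg hdev hmoment hmean hsign, fun hD L g hg => ?_⟩
  -- McShane extension: `g` agrees on `[0, M]` with a globally `L`-Lipschitz function.
  obtain ⟨g', hg', hgg'⟩ := hg.extend_real
  calc |∫ v in Ioc 0 M, g v * (f v - equilibriumProfile u v)|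
      = |∫ v in Ioc 0 M, g' v * (f v - equilibriumProfile u v)| := by
        rw [setIntegral_congr_fun measurableSet_Ioc
          fun v hv => congrArg (· * _) (hgg' (Ioc_subset_Icc_self hv))]
    _ ≤ L * ∫ v in Ioc 0 M, v * (f v - equilibriumProfile u v) :=
        abs_integral_mul_le_of_lipschitzWith hg' hdev hmoment hmean hsign
    _ ≤ L * (ε * u ^ 2 / 2) := by gcongr; exact hD
    _ = L * ε * u ^ 2 / 2 := by ring

/-- **Smallness of the deviation controls all Lipschitz moments.** -/
theorem deviation_controls_lipschitz_moments
    (M ε : ℝ) (hM : 0 < M) (hε : 0 < ε)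
    (f : ℝ → ℝ) (hfm : Measurable f)
    (hfr : ∀ᵐ v ∂(volume.restrict (Set.Ioc (0 : ℝ) M)), f v ∈ Set.Icc (0 : ℝ) 1)
    (u : ℝ) (hu : u = ∫ v in Set.Ioc (0 : ℝ) M, f v) :
    0 ≤ (∫ v in Set.Ioc (0 : ℝ) M,
          v * (f v - Set.indicator (Set.Icc 0 u) (fun _ => (1 : ℝ)) v)) ∧
    ((∫ v in Set.Ioc (0 : ℝ) M,
        v * (f v - Set.indicator (Set.Icc 0 u) (fun _ => (1 : ℝ)) v)) ≤ ε * u ^ 2 / 2 →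
      ∀ (L : NNReal) (g : ℝ → ℝ), LipschitzOnWith L g (Set.Icc 0 M) →
        |∫ v in Set.Ioc (0 : ℝ) M,
            g v * (f v - Set.indicator (Set.Icc 0 u) (fun _ => (1 : ℝ)) v)|
          ≤ (L : ℝ) * ε * u ^ 2 / 2) :=
  deviation_controls_lipschitz_moments_general M ε f hfm hfr u hu

end
end

section
/- Let d ≥ 1, M > 0, ε > 0, r > 0, and let X = L¹(ℝ^d × [0,M]). Then the regularized collision operator L^r maps X to X and is uniformly Lipschitz on X: there exists a constant C > 0 (depending only on M, ε, r and the Lipschitz constant of 1^r) such that for all f, g ∈ X, ‖L^r(f) − L^r(g)‖_{L¹(ℝ^d × [0,M])} ≤ C ‖f − g‖_{L¹(ℝ^d × [0,M])}. -/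
open MeasureTheory Real Filter Topology

noncomputable section

/-- The reference measure on `ℝ^d × [0,M]`, i.e. the underlying measure of
`X = L¹(ℝ^d × [0,M])`. -/
def nuM (d : ℕ) (M : ℝ) : Measure (EuclideanSpace ℝ (Fin d) × ℝ) :=
  (volume : Measure (EuclideanSpace ℝ (Fin d))).prod
    ((volume : Measure ℝ).restrict (Set.Icc 0 M))

/-- The cut-off `w(s) = s·1_{[0,1]}(s) + 1_{{s>1}}(s)`. -/
def wcut (s : ℝ) : ℝ := min (max s 0) 1

/-- Equilibrium projection on `[0,M]`: `Π_g = 1_{[0, ∫₀^M g]}`. -/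
def PiM (M : ℝ) (g : ℝ → ℝ) : ℝ → ℝ :=
  Set.indicator (Set.Icc 0 (∫ v in Set.Icc (0 : ℝ) M, g v)) (fun _ => (1 : ℝ))

/-- The regularized collision operator `L^r` (with smoothed Heaviside `oneR`). -/
def Lr {d : ℕ} (M ε : ℝ) (oneR : ℝ → ℝ)
    (f : EuclideanSpace ℝ (Fin d) × ℝ → ℝ) : EuclideanSpace ℝ (Fin d) × ℝ → ℝ :=
  fun p =>
    (PiM M (fun w => wcut (f (p.1, w))) p.2 - wcut (f p)) *
      oneR ((∫ v in Set.Icc (0 : ℝ) M,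
              v * (wcut (f (p.1, v)) - PiM M (fun w => wcut (f (p.1, w))) v)) -
            ε * ∫ v in Set.Icc (0 : ℝ) M, v * PiM M (fun w => wcut (f (p.1, w))) v)

/-!
Everything happens fiber by fiber. For fixed `x`, put `D(x) = ∫₀^M |w(f(x,·)) - w(g(x,·))|`,
which is at most `∫₀^M |f(x,·) - g(x,·)|` because `w` is 1-Lipschitz. The masses `∫₀^M w∘f`
then differ by at most `D(x)`, hence so do the equilibria `Π` in `L¹(0,M)`, and the argument of
`1^r` moves by at most `M (2 + |ε|) D(x)`. Writing `L^r = a · b` with `|a|, |b| ≤ 1` and using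
`|ab - a'b'| ≤ |a - a'| + |b - b'|` bounds the fiber `L¹` distance by a multiple of `D(x)`, and
Fubini integrates this over `x`. Integrability of `L^r f` is the same bound against `g = 0`,
on which `L^r` vanishes almost everywhere.
-/

open Set

lemma wcut_mem_Icc (s : ℝ) : wcut s ∈ Icc (0 : ℝ) 1 :=
  ⟨le_min (le_max_right _ _) zero_le_one, min_le_right _ _⟩

lemma wcut_zero : wcut 0 = 0 := by simp [wcut]

lemma lipschitzWith_wcut : LipschitzWith 1 wcut :=
  (LipschitzWith.id.max_const 0).min_const 1

lemma abs_wcut_sub_wcut_le (a b : ℝ) : |wcut a - wcut b| ≤ |a - b| := by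
  simpa [Real.dist_eq] using lipschitzWith_wcut.dist_le_mul a b

lemma PiM_mem_Icc (M : ℝ) (g : ℝ → ℝ) (v : ℝ) : PiM M g v ∈ Icc (0 : ℝ) 1 := by
  by_cases h : v ∈ Icc 0 (∫ v in Icc (0 : ℝ) M, g v) <;> simp [PiM, indicator_of_mem, h]

lemma abs_mul_sub_mul_le {a a' b b' : ℝ} (hb : |b| ≤ 1) (ha' : |a'| ≤ 1) :
    |a * b - a' * b'| ≤ |a - a'| + |b - b'| :=
  calc |a * b - a' * b'| = |(a - a') * b + a' * (b - b')| := by ring_nf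
    _ ≤ |a - a'| * |b| + |a'| * |b - b'| := by
      rw [← abs_mul, ← abs_mul]; exact abs_add_le _ _
    _ ≤ |a - a'| + |b - b'| := by
      gcongr
      · exact mul_le_of_le_one_right (abs_nonneg _) hb
      · exact mul_le_of_le_one_left (abs_nonneg _) ha'

lemma integral_abs_indicator_Icc_sub_le (S : Set ℝ) {a b : ℝ} (ha : 0 ≤ a) (hb : 0 ≤ b) :
    ∫ v in S, |(Icc 0 a).indicator (fun _ => (1 : ℝ)) v - (Icc 0 b).indicator (fun _ => 1) v|
      ≤ |a - b| := by
  wlog hab : a ≤ b generalizing a b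
  · simpa only [abs_sub_comm] using this hb ha (le_of_not_ge hab)
  have hsub : Icc (0 : ℝ) a ⊆ Icc 0 b := Icc_subset_Icc_right hab
  simp_rw [← abs_indicator_symmDiff, abs_of_nonneg (indicator_nonneg (fun _ _ => zero_le_one) _),
    symmDiff_of_le hsub]
  rw [integral_indicator_const _ (measurableSet_Icc.diff measurableSet_Icc), smul_eq_mul, mul_one,
    measureReal_restrict_apply (measurableSet_Icc.diff measurableSet_Icc), abs_sub_comm,
    abs_of_nonneg (sub_nonneg.2 hab)]
  have hfin : volume (Icc (0 : ℝ) b) ≠ ⊤ := measure_Icc_lt_top.ne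
  calc volume.real ((Icc 0 b \ Icc 0 a) ∩ S) ≤ volume.real (Icc 0 b \ Icc 0 a) :=
        measureReal_mono inter_subset_left (measure_ne_top_of_subset sdiff_subset hfin)
    _ = b - a := by
      rw [measureReal_sdiff hsub measurableSet_Icc hfin, Real.volume_real_Icc_of_le hb,
        Real.volume_real_Icc_of_le ha]; ring

lemma MeasureTheory.Integrable.wcut_comp {α : Type*} [MeasurableSpace α] {μ : Measure α} {φ : α → ℝ}
    (hφ : Integrable φ μ) : Integrable (fun x => wcut (φ x)) μ :=
  hφ.mono (lipschitzWith_wcut.continuous.comp_aestronglyMeasurable hφ.1) <|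
    ae_of_all _ fun x => by simpa [wcut_zero] using abs_wcut_sub_wcut_le (φ x) 0

lemma integrable_PiM (M : ℝ) (g : ℝ → ℝ) : Integrable (PiM M g) (volume.restrict (Icc 0 M)) :=
  (integrable_const 1).indicator measurableSet_Icc

def firstMoment (M : ℝ) (u : ℝ → ℝ) : ℝ := ∫ v in Icc 0 M, v * u v

lemma abs_firstMoment_sub_le {M : ℝ} {u u' : ℝ → ℝ} (hu : IntegrableOn u (Icc 0 M))
    (hu' : IntegrableOn u' (Icc 0 M)) :
    |firstMoment M u - firstMoment M u'| ≤ M * ∫ v in Icc 0 M, |u v - u' v| := by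
  have hmul {u : ℝ → ℝ} (hu : IntegrableOn u (Icc 0 M)) :
      IntegrableOn (fun v => v * u v) (Icc 0 M) :=
    hu.continuousOn_mul continuousOn_id isCompact_Icc
  rw [firstMoment, firstMoment, ← integral_sub (hmul hu) (hmul hu'), ← integral_const_mul M,
    ← Real.norm_eq_abs]
  refine norm_integral_le_of_norm_le ((hu.sub hu').abs.const_mul M) ?_
  filter_upwards [ae_restrict_mem measurableSet_Icc] with v hv
  rw [Real.norm_eq_abs, ← mul_sub, abs_mul, abs_of_nonneg hv.1]
  exact mul_le_mul_of_nonneg_right hv.2 (abs_nonneg _)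

/-- The argument of `1^r` in `L^r f (x, ·)`, as a function of the fiber `φ = f (x, ·)`. -/
def momentGap (M ε : ℝ) (φ : ℝ → ℝ) : ℝ :=
  firstMoment M (wcut ∘ φ - PiM M (wcut ∘ φ)) - ε * firstMoment M (PiM M (wcut ∘ φ))

def fiberLr (M ε : ℝ) (oneR : ℝ → ℝ) (φ : ℝ → ℝ) (v : ℝ) : ℝ :=
  (PiM M (wcut ∘ φ) v - wcut (φ v)) * oneR (momentGap M ε φ)

lemma Lr_apply {d : ℕ} (M ε : ℝ) (oneR : ℝ → ℝ) (f : EuclideanSpace ℝ (Fin d) × ℝ → ℝ)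
    (x : EuclideanSpace ℝ (Fin d)) (v : ℝ) :
    Lr M ε oneR f (x, v) = fiberLr M ε oneR (fun w => f (x, w)) v := rfl

section Fiber

variable {M ε : ℝ} {oneR : ℝ → ℝ} {K : NNReal} {φ ψ : ℝ → ℝ}

lemma integral_abs_PiM_sub_le (hφ : Integrable φ (volume.restrict (Icc 0 M)))
    (hψ : Integrable ψ (volume.restrict (Icc 0 M))) :
    ∫ v in Icc 0 M, |PiM M (wcut ∘ φ) v - PiM M (wcut ∘ ψ) v|
      ≤ ∫ v in Icc 0 M, |wcut (φ v) - wcut (ψ v)| := by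
  have hmass (φ : ℝ → ℝ) : 0 ≤ ∫ v in Icc 0 M, wcut (φ v) :=
    integral_nonneg fun v => (wcut_mem_Icc _).1
  refine (integral_abs_indicator_Icc_sub_le _ (hmass φ) (hmass ψ)).trans ?_
  rw [← integral_sub hφ.wcut_comp hψ.wcut_comp]
  exact abs_integral_le_integral_abs

lemma abs_momentGap_sub_le (hM : 0 ≤ M) (hφ : Integrable φ (volume.restrict (Icc 0 M)))
    (hψ : Integrable ψ (volume.restrict (Icc 0 M))) :
    |momentGap M ε φ - momentGap M ε ψ|
      ≤ M * (2 + |ε|) * ∫ v in Icc 0 M, |wcut (φ v) - wcut (ψ v)| := by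
  set D := ∫ v in Icc 0 M, |wcut (φ v) - wcut (ψ v)|
  set E := ∫ v in Icc 0 M, |PiM M (wcut ∘ φ) v - PiM M (wcut ∘ ψ) v|
  have hE : E ≤ D := integral_abs_PiM_sub_le hφ hψ
  have hw := hφ.wcut_comp.sub hψ.wcut_comp
  have hPi := (integrable_PiM M (wcut ∘ φ)).sub (integrable_PiM M (wcut ∘ ψ))
  have hfirst : ∫ v in Icc 0 M,
        |(wcut (φ v) - PiM M (wcut ∘ φ) v) - (wcut (ψ v) - PiM M (wcut ∘ ψ) v)| ≤ D + E :=
    calc _ ≤ ∫ v in Icc 0 M,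
            (|wcut (φ v) - wcut (ψ v)| + |PiM M (wcut ∘ φ) v - PiM M (wcut ∘ ψ) v|) :=
          integral_mono_of_nonneg (ae_of_all _ fun _ => abs_nonneg _) (hw.abs.add hPi.abs)
            (ae_of_all _ fun v => by simpa only [sub_sub_sub_comm] using abs_sub _ _)
      _ = D + E := integral_add hw.abs hPi.abs
  calc |momentGap M ε φ - momentGap M ε ψ|
      ≤ |firstMoment M (wcut ∘ φ - PiM M (wcut ∘ φ)) - firstMoment M (wcut ∘ ψ - PiM M (wcut ∘ ψ))|
          + |ε| * |firstMoment M (PiM M (wcut ∘ φ)) - firstMoment M (PiM M (wcut ∘ ψ))| := by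
        rw [momentGap, momentGap, ← abs_mul, mul_sub, sub_sub_sub_comm]
        exact abs_sub _ _
    _ ≤ M * (D + E) + |ε| * (M * E) := by
        gcongr
        · exact (abs_firstMoment_sub_le (hφ.wcut_comp.sub (integrable_PiM _ _))
            (hψ.wcut_comp.sub (integrable_PiM _ _))).trans (mul_le_mul_of_nonneg_left hfirst hM)
        · exact abs_firstMoment_sub_le (integrable_PiM _ _) (integrable_PiM _ _)
    _ ≤ M * (2 + |ε|) * D := by
        have := mul_le_mul_of_nonneg_left hE hM
        nlinarith [abs_nonneg ε]

lemma abs_fiberLr_sub_le (hR : LipschitzWith K oneR) (hR01 : ∀ s, oneR s ∈ Icc (0 : ℝ) 1)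
    (v : ℝ) :
    |fiberLr M ε oneR φ v - fiberLr M ε oneR ψ v|
      ≤ |PiM M (wcut ∘ φ) v - PiM M (wcut ∘ ψ) v| + |wcut (φ v) - wcut (ψ v)| +
        K * |momentGap M ε φ - momentGap M ε ψ| := by
  have hR_abs (s : ℝ) : |oneR s| ≤ 1 := abs_le.2 ⟨by linarith [(hR01 s).1], (hR01 s).2⟩
  have hcoef : |PiM M (wcut ∘ ψ) v - wcut (ψ v)| ≤ 1 :=
    abs_sub_le_of_nonneg_of_le (PiM_mem_Icc _ _ _).1 (PiM_mem_Icc _ _ _).2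
      (wcut_mem_Icc _).1 (wcut_mem_Icc _).2
  refine (abs_mul_sub_mul_le (hR_abs _) hcoef).trans ?_
  apply add_le_add
  · rw [sub_sub_sub_comm]; exact abs_sub _ _
  · simpa [Real.dist_eq] using hR.dist_le_mul (momentGap M ε φ) (momentGap M ε ψ)

lemma integral_abs_fiberLr_sub_le (hM : 0 ≤ M) (hR : LipschitzWith K oneR)
    (hR01 : ∀ s, oneR s ∈ Icc (0 : ℝ) 1) (hφ : Integrable φ (volume.restrict (Icc 0 M)))
    (hψ : Integrable ψ (volume.restrict (Icc 0 M))) :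
    ∫ v in Icc 0 M, |fiberLr M ε oneR φ v - fiberLr M ε oneR ψ v|
      ≤ (2 + K * M ^ 2 * (2 + |ε|)) * ∫ v in Icc 0 M, |φ v - ψ v| := by
  set D := ∫ v in Icc 0 M, |wcut (φ v) - wcut (ψ v)|
  have hw : Integrable (fun v => |wcut (φ v) - wcut (ψ v)|) (volume.restrict (Icc 0 M)) :=
    (hφ.wcut_comp.sub hψ.wcut_comp).abs
  have hPi : Integrable (fun v => |PiM M (wcut ∘ φ) v - PiM M (wcut ∘ ψ) v|)
      (volume.restrict (Icc 0 M)) :=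
    ((integrable_PiM M (wcut ∘ φ)).sub (integrable_PiM M (wcut ∘ ψ))).abs
  have hPiw : Integrable (fun v => |PiM M (wcut ∘ φ) v - PiM M (wcut ∘ ψ) v| +
      |wcut (φ v) - wcut (ψ v)|) (volume.restrict (Icc 0 M)) := hPi.add hw
  have hD : D ≤ ∫ v in Icc 0 M, |φ v - ψ v| :=
    integral_mono_of_nonneg (ae_of_all _ fun _ => abs_nonneg _) (hφ.sub hψ).abs
      (ae_of_all _ fun v => abs_wcut_sub_wcut_le _ _)
  calc ∫ v in Icc 0 M, |fiberLr M ε oneR φ v - fiberLr M ε oneR ψ v|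
      ≤ ∫ v in Icc 0 M, (|PiM M (wcut ∘ φ) v - PiM M (wcut ∘ ψ) v| + |wcut (φ v) - wcut (ψ v)| +
          K * |momentGap M ε φ - momentGap M ε ψ|) :=
        integral_mono_of_nonneg (ae_of_all _ fun _ => abs_nonneg _)
          (hPiw.add (integrable_const _)) (ae_of_all _ (abs_fiberLr_sub_le hR hR01))
    _ = (∫ v in Icc 0 M, |PiM M (wcut ∘ φ) v - PiM M (wcut ∘ ψ) v|) + D +
          M * (K * |momentGap M ε φ - momentGap M ε ψ|) := by
        rw [integral_add hPiw (integrable_const _), integral_add hPi hw, integral_const,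
          smul_eq_mul, measureReal_restrict_apply_univ, Real.volume_real_Icc_of_le hM, sub_zero]
    _ ≤ D + D + M * (K * (M * (2 + |ε|) * D)) := by
        gcongr
        · exact integral_abs_PiM_sub_le hφ hψ
        · exact abs_momentGap_sub_le hM hφ hψ
    _ = (2 + K * M ^ 2 * (2 + |ε|)) * D := by ring
    _ ≤ (2 + K * M ^ 2 * (2 + |ε|)) * ∫ v in Icc 0 M, |φ v - ψ v| := by gcongr

lemma fiberLr_zero_ae_eq :
    fiberLr M ε oneR 0 =ᵐ[volume.restrict (Icc 0 M)] 0 := by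
  filter_upwards [ae_restrict_of_ae (Measure.ae_ne volume 0)] with v hv
  simp [fiberLr, PiM, wcut_zero, hv]

lemma integral_abs_fiberLr_le (hM : 0 ≤ M) (hR : LipschitzWith K oneR)
    (hR01 : ∀ s, oneR s ∈ Icc (0 : ℝ) 1) (hφ : Integrable φ (volume.restrict (Icc 0 M))) :
    ∫ v in Icc 0 M, |fiberLr M ε oneR φ v|
      ≤ (2 + K * M ^ 2 * (2 + |ε|)) * ∫ v in Icc 0 M, |φ v| := by
  have h := integral_abs_fiberLr_sub_le (ε := ε) hM hR hR01 hφ (integrable_zero _ _ _)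
  simp only [Pi.zero_apply, sub_zero] at h
  refine le_of_eq_of_le (integral_congr_ae ?_) h
  filter_upwards [fiberLr_zero_ae_eq] with v hv
  rw [hv, Pi.zero_apply, sub_zero]

lemma integrable_fiberLr (hφ : Integrable φ (volume.restrict (Icc 0 M))) :
    Integrable (fiberLr M ε oneR φ) (volume.restrict (Icc 0 M)) :=
  ((integrable_PiM M _).sub hφ.wcut_comp).mul_const _

end Fiber

lemma measurable_indicator_Icc_zero :
    Measurable fun p : ℝ × ℝ => (Icc 0 p.1).indicator (fun _ => (1 : ℝ)) p.2 :=
  measurable_const.indicator (s := {p : ℝ × ℝ | 0 ≤ p.2 ∧ p.2 ≤ p.1})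
    ((measurableSet_le measurable_const measurable_snd).inter
      (measurableSet_le measurable_snd measurable_fst))

section Product

variable {d : ℕ} {M ε : ℝ} {oneR : ℝ → ℝ} {K : NNReal} {f : EuclideanSpace ℝ (Fin d) × ℝ → ℝ}

lemma aestronglyMeasurable_Lr (hR : Continuous oneR) (hf : AEStronglyMeasurable f (nuM d M)) :
    AEStronglyMeasurable (Lr M ε oneR f) (nuM d M) := by
  have hw : AEStronglyMeasurable (fun p => wcut (f p)) (nuM d M) :=
    lipschitzWith_wcut.continuous.comp_aestronglyMeasurable hf
  have hPi : AEStronglyMeasurable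
      (fun p : EuclideanSpace ℝ (Fin d) × ℝ => PiM M (wcut ∘ fun v => f (p.1, v)) p.2) (nuM d M) :=
    (measurable_indicator_Icc_zero.comp_aemeasurable
      (hw.integral_prod_right'.comp_fst.aemeasurable.prodMk
        measurable_snd.aemeasurable)).aestronglyMeasurable
  have hgap : AEStronglyMeasurable (fun x => momentGap M ε fun v => f (x, v)) volume :=
    (measurable_snd.aestronglyMeasurable.mul (hw.sub hPi)).integral_prod_right'.sub
      ((measurable_snd.aestronglyMeasurable.mul hPi).integral_prod_right'.const_mul ε)
  exact (hPi.sub hw).mul (hR.comp_aestronglyMeasurable hgap.comp_fst)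

lemma integrable_Lr (hM : 0 ≤ M) (hR : LipschitzWith K oneR)
    (hR01 : ∀ s, oneR s ∈ Icc (0 : ℝ) 1) (hf : Integrable f (nuM d M)) :
    Integrable (Lr M ε oneR f) (nuM d M) := by
  have hmeas := aestronglyMeasurable_Lr (ε := ε) hR.continuous hf.1
  rw [nuM] at hf hmeas ⊢
  refine (integrable_prod_iff hmeas).2 ⟨?_, ?_⟩
  · filter_upwards [hf.prod_right_ae] with x hx
    simp only [Lr_apply]
    exact integrable_fiberLr hx
  refine (hf.norm.integral_prod_left.const_mul (2 + K * M ^ 2 * (2 + |ε|))).mono'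
    hmeas.norm.integral_prod_right' ?_
  filter_upwards [hf.prod_right_ae] with x hx
  rw [Real.norm_of_nonneg (integral_nonneg fun _ => norm_nonneg _)]
  exact integral_abs_fiberLr_le hM hR hR01 hx

end Product

theorem Lr_lipschitz_general
    (d : ℕ) (M : ℝ) (hM : 0 < M) (ε : ℝ)
    (oneR : ℝ → ℝ) (K : NNReal) (hRlip : LipschitzWith K oneR)
    (hRrange : ∀ s, oneR s ∈ Set.Icc (0 : ℝ) 1) :
    -- `L^r` maps `X` to `X` and is uniformly Lipschitz on `X`
    ∃ C > (0 : ℝ),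
      ∀ f g : EuclideanSpace ℝ (Fin d) × ℝ → ℝ,
        Integrable f (nuM d M) → Integrable g (nuM d M) →
        Integrable (Lr M ε oneR f) (nuM d M) ∧
        (∫ p, |Lr M ε oneR f p - Lr M ε oneR g p| ∂(nuM d M))
          ≤ C * ∫ p, |f p - g p| ∂(nuM d M) := by
  refine ⟨2 + K * M ^ 2 * (2 + |ε|), by positivity, fun f g hf hg => ?_⟩
  have hLf := integrable_Lr (ε := ε) hM.le hRlip hRrange hf
  have hLg := integrable_Lr (ε := ε) hM.le hRlip hRrange hg
  refine ⟨hLf, ?_⟩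
  have hLfg := (hLf.sub hLg).abs
  have hfg := (hf.sub hg).abs
  rw [nuM] at hLfg hfg ⊢
  rw [integral_prod (fun p => |Lr M ε oneR f p - Lr M ε oneR g p|) hLfg,
    integral_prod (fun p => |f p - g p|) hfg, ← integral_const_mul]
  refine integral_mono_ae hLfg.integral_prod_left (hfg.integral_prod_left.const_mul _) ?_
  filter_upwards [hf.prod_right_ae, hg.prod_right_ae] with x hfx hgx
  simp only [Lr_apply]
  exact integral_abs_fiberLr_sub_le hM.le hRlip hRrange hfx hgx

/-- **The regularized collision operator `L^r` is uniformly Lipschitz on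
`X = L¹(ℝ^d × [0,M])`.** -/
theorem Lr_lipschitz
    (d : ℕ) (hd : 1 ≤ d) (M : ℝ) (hM : 0 < M) (ε : ℝ) (hε : 0 < ε) (r : ℝ) (hr : 0 < r)
    (oneR : ℝ → ℝ) (K : NNReal) (hRlip : LipschitzWith K oneR)
    (hR1 : ContDiff ℝ 1 oneR) (hRmono : Monotone oneR)
    (hR0 : ∀ s ≤ (0 : ℝ), oneR s = 0) (hR2 : ∀ s, 2 * r ≤ s → oneR s = 1)
    (hRrange : ∀ s, oneR s ∈ Set.Icc (0 : ℝ) 1) :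
    -- `L^r` maps `X` to `X` and is uniformly Lipschitz on `X`
    ∃ C > (0 : ℝ),
      ∀ f g : EuclideanSpace ℝ (Fin d) × ℝ → ℝ,
        Integrable f (nuM d M) → Integrable g (nuM d M) →
        Integrable (Lr M ε oneR f) (nuM d M) ∧
        (∫ p, |Lr M ε oneR f p - Lr M ε oneR g p| ∂(nuM d M))
          ≤ C * ∫ p, |f p - g p| ∂(nuM d M) :=
  Lr_lipschitz_general d M hM ε oneR K hRlip hRrange

end
end
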